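/- arXiv:1404.3766 — 2 statements merged into one kernel-verified Lean document; each statement's English description precedes it below -/
import Mathlib

section
/- Let β > 0 and define the soft-thresholding function η(x; β) = sign(x)(|x| − β) if |x| > β and η(x; β) = 0 if |x| ≤ β. Let P ≥ 2, N ≥ 1, and let w^p : {1,…,N} → ℝ for p = 1, …, P. Let T ≥ 0, and for each n let S_n ⊆ {2,…,P} satisfy |w^p(n)| ≤ T for all p ∈ {2,…,P} \ S_n; set m_n = |S_n| and U(n) = |w¹(n) + Σ_{p∈S_n} w^p(n)| + (P − 1 − m_n)·T. Define x^G : {1,…,N} → ℝ by x^G(n) = η(Σ_{p=1}^P w^p(n); β) if U(n) > β, and x^G(n) = 0 otherwise. Then x^G(n) = η(Σ_{p=1}^P w^p(n); β) for every n. -/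
open Finset

/-- The soft-thresholding function `η(x; β) = sign(x)(|x| − β)` if `|x| > β`,
and `0` if `|x| ≤ β`. -/
noncomputable def softThreshold (x β : ℝ) : ℝ :=
  if β < |x| then Real.sign x * (|x| - β) else 0

/-- Theorem 1 of the paper (correctness of GCAMP): the GCAMP output `x^G`,
which applies the soft threshold `η(·; β)` only at the coordinates `n` whose
upper bound `U(n)` exceeds `β` and sets all other coordinates to zero,
coincides with the centralized AMP output `η(∑_{p=1}^P w^p(n); β)` at every
coordinate. -/
theorem gcamp_correct (β : ℝ) (hβ : 0 < β) (P N : ℕ) (hP : 2 ≤ P) (hN : 1 ≤ N)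
    (w : ℕ → ℕ → ℝ) (T : ℝ) (hT : 0 ≤ T)
    (S : ℕ → Finset ℕ) (hS : ∀ n ∈ Finset.Icc 1 N, S n ⊆ Finset.Icc 2 P)
    (hbound : ∀ n ∈ Finset.Icc 1 N, ∀ p ∈ Finset.Icc 2 P, p ∉ S n → |w p n| ≤ T)
    (U : ℕ → ℝ)
    (hU : ∀ n ∈ Finset.Icc 1 N,
      U n = |w 1 n + ∑ p ∈ S n, w p n| + ((P : ℝ) - 1 - (S n).card) * T)
    (xG : ℕ → ℝ)
    (hxG : ∀ n ∈ Finset.Icc 1 N,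
      xG n = if β < U n then softThreshold (∑ p ∈ Finset.Icc 1 P, w p n) β else 0) :
    ∀ n ∈ Finset.Icc 1 N, xG n = softThreshold (∑ p ∈ Finset.Icc 1 P, w p n) β := by
  intro n hn
  rw [hxG n hn]
  by_cases h : β < U n
  · rw [if_pos h]
  · rw [if_neg h]
    push_neg at h
    -- show |sum| ≤ U n ≤ β, hence softThreshold = 0
    have hsub : S n ⊆ Finset.Icc 2 P := hS n hn
    have hins : Finset.Icc 1 P = insert 1 (Finset.Icc 2 P) := by
      ext x; simp [Finset.mem_Icc, Finset.mem_insert]; omega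
    have h1 : (1 : ℕ) ∉ Finset.Icc 2 P := by simp
    have hsum : ∑ p ∈ Finset.Icc 1 P, w p n
        = w 1 n + ∑ p ∈ S n, w p n + ∑ p ∈ Finset.Icc 2 P \ S n, w p n := by
      rw [hins, Finset.sum_insert h1, ← Finset.sum_sdiff hsub]; ring
    have hcard : ((Finset.Icc 2 P \ S n).card : ℝ) = (P : ℝ) - 1 - (S n).card := by
      rw [Finset.card_sdiff_of_subset hsub]
      have h2 : (Finset.Icc 2 P).card = P - 1 := by
        rw [Nat.card_Icc]; omega
      have h3 : (S n).card ≤ P - 1 := h2 ▸ Finset.card_le_card hsub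
      push_cast [h2, Nat.cast_sub h3, Nat.cast_sub (by omega : 1 ≤ P)]
      ring
    have hle : |∑ p ∈ Finset.Icc 1 P, w p n| ≤ U n := by
      rw [hsum, hU n hn, ← hcard]
      calc |w 1 n + ∑ p ∈ S n, w p n + ∑ p ∈ Finset.Icc 2 P \ S n, w p n|
          ≤ |w 1 n + ∑ p ∈ S n, w p n| + |∑ p ∈ Finset.Icc 2 P \ S n, w p n| :=
            abs_add_le _ _
        _ ≤ |w 1 n + ∑ p ∈ S n, w p n| + ((Finset.Icc 2 P \ S n).card : ℝ) * T := by
            gcongr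
            calc |∑ p ∈ Finset.Icc 2 P \ S n, w p n|
                ≤ ∑ p ∈ Finset.Icc 2 P \ S n, |w p n| := Finset.abs_sum_le_sum_abs _ _
              _ ≤ ∑ p ∈ Finset.Icc 2 P \ S n, T := by
                  apply Finset.sum_le_sum
                  intro p hp
                  rw [Finset.mem_sdiff] at hp
                  exact hbound n hn p hp.1 hp.2
              _ = ((Finset.Icc 2 P \ S n).card : ℝ) * T := by
                  rw [Finset.sum_const, nsmul_eq_mul]
    unfold softThreshold
    rw [if_neg (by linarith)]
end

section
/- Let β > 0 and define the soft-thresholding function η(x; β) = sign(x)(|x| − β) if |x| > β and η(x; β) = 0 if |x| ≤ β. Let P ≥ 1, N ≥ 1, and let w^p : {1,…,N} → ℝ for p = 1, …, P. Let D ⊆ {1,…,N} and let u₁, …, u_P be real numbers such that |w^p(n)| ≤ |u_p| for every p and every n ∉ D, and suppose Σ_{p=1}^P |u_p| ≤ β. Define x : {1,…,N} → ℝ by x(n) = η(Σ_{p=1}^P w^p(n); β) for n ∈ D and x(n) = 0 for n ∉ D. Then x(n) = η(Σ_{p=1}^P w^p(n); β) for every n. -/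
open Finset

/-- Theorem 2 of the paper (correctness of Modified TA): `D` is the set of
coordinates already processed by global summations when Modified TA
terminates, `u_p` is the current top unsent entry of sensor `p` at
termination (so all unsent values satisfy `|w^p(n)| ≤ |u_p|`), and the
termination condition `∑_p |u_p| ≤ β` guarantees that the Modified TA output
`x`, which soft-thresholds only processed coordinates and zeroes the rest,
coincides with the centralized AMP output `η(∑_p w^p(n); β)` at every
coordinate. -/
theorem modified_ta_correct (β : ℝ) (hβ : 0 < β) (P N : ℕ) (hP : 1 ≤ P) (hN : 1 ≤ N)
    (w : ℕ → ℕ → ℝ) (D : Finset ℕ) (hD : D ⊆ Finset.Icc 1 N)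
    (u : ℕ → ℝ)
    (hu : ∀ p ∈ Finset.Icc 1 P, ∀ n ∈ Finset.Icc 1 N, n ∉ D → |w p n| ≤ |u p|)
    (hsum : ∑ p ∈ Finset.Icc 1 P, |u p| ≤ β)
    (x : ℕ → ℝ)
    (hx : ∀ n ∈ Finset.Icc 1 N,
      x n = if n ∈ D then softThreshold (∑ p ∈ Finset.Icc 1 P, w p n) β else 0) :
    ∀ n ∈ Finset.Icc 1 N, x n = softThreshold (∑ p ∈ Finset.Icc 1 P, w p n) β := by
  intro n hn
  rw [hx n hn]
  by_cases h : n ∈ D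
  · simp [h]
  · simp only [h, if_false]
    have hle : |∑ p ∈ Finset.Icc 1 P, w p n| ≤ β := by
      calc |∑ p ∈ Finset.Icc 1 P, w p n| ≤ ∑ p ∈ Finset.Icc 1 P, |w p n| :=
            Finset.abs_sum_le_sum_abs _ _
        _ ≤ ∑ p ∈ Finset.Icc 1 P, |u p| :=
            Finset.sum_le_sum fun p hp => hu p hp n hn h
        _ ≤ β := hsum
    rw [softThreshold, if_neg (not_lt.mpr hle)]
end
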